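/- arXiv:2406.01581 — 5 statements merged into one kernel-verified Lean document; each statement's English description precedes it below -/
import Mathlib

section
/- For any β > 1 and any s ∈ ℝ, the Gaussian tail satisfies ∫_s^∞ (1/√(2π)) e^{-t²/2} dt ≥ (√(2e(β-1)) / (2β√π)) · e^{-β s²/2}. -/
/-!
Write `B(s) = K e^{-β s²/2}` for the claimed lower bound and `φ` for the standard normal
density. Since `B → 0` at `+∞`, it suffices that `-B' ≤ φ` pointwise and then to integrate
from `s` to `∞`. With `x = (β - 1) u²`, the inequality `-B'(u) ≤ φ(u)` reduces to
`√(e x) ≤ e^{x/2}`, i.e. `x ≤ e^{x - 1}`; the constant `K` is chosen so that this is tight at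
`x = 1`.
-/

open MeasureTheory Real Filter Set Topology

theorem sub_le_integral_Ioi_of_hasDerivAt_of_le {f g g' : ℝ → ℝ} {a m : ℝ}
    (hderiv : ∀ x ∈ Ici a, HasDerivAt g (g' x) x) (hf : IntegrableOn f (Ioi a))
    (hle : ∀ x ∈ Ioi a, g' x ≤ f x) (hlim : Tendsto g atTop (𝓝 m)) :
    m - g a ≤ ∫ x in Ioi a, f x := by
  refine le_of_tendsto_of_tendsto (hlim.sub_const (g a))
    (intervalIntegral_tendsto_integral_Ioi a hf tendsto_id) ?_
  filter_upwards [eventually_ge_atTop a] with b hab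
  exact intervalIntegral.sub_le_integral_of_hasDeriv_right_of_le hab
    (fun x hx => (hderiv x hx.1).continuousAt.continuousWithinAt)
    (fun x hx => (hderiv x (Ioo_subset_Icc_self.trans Icc_subset_Ici_self hx)).hasDerivWithinAt)
    ((integrableOn_Icc_iff_integrableOn_Ioc).mpr (hf.mono_set Ioc_subset_Ioi_self))
    (fun x hx => hle x hx.1)

theorem sqrt_exp_one_mul_mul_exp_le_one (c u : ℝ) (hc : 0 ≤ c) :
    √(exp 1 * c) * u * exp (-(c * u ^ 2) / 2) ≤ 1 := by
  rcases le_or_gt u 0 with hu | hu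
  · have : √(exp 1 * c) * u ≤ 0 := mul_nonpos_of_nonneg_of_nonpos (sqrt_nonneg _) hu
    nlinarith [exp_pos (-(c * u ^ 2) / 2)]
  have key : exp 1 * (c * u ^ 2) ≤ exp (c * u ^ 2 / 2) ^ 2 := by
    have := add_one_le_exp (c * u ^ 2 - 1)
    rw [← exp_nat_mul, show ((2 : ℕ) : ℝ) * (c * u ^ 2 / 2) = c * u ^ 2 - 1 + 1 by ring,
      exp_add, mul_comm (exp _)]
    gcongr
    linarith
  have hsqrt : √(exp 1 * c) * u ≤ exp (c * u ^ 2 / 2) :=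
    calc √(exp 1 * c) * u = √(exp 1 * (c * u ^ 2)) := by
          rw [← mul_assoc, sqrt_mul (by positivity) (u ^ 2), sqrt_sq hu.le]
      _ ≤ √(exp (c * u ^ 2 / 2) ^ 2) := sqrt_le_sqrt key
      _ = exp (c * u ^ 2 / 2) := sqrt_sq (exp_pos _).le
  rwa [neg_div, exp_neg, ← div_eq_mul_inv, div_le_one (exp_pos _)]

theorem const_mul_deriv_exp_neg_mul_sq_le_gaussian (β u : ℝ) (hβ : 1 ≤ β) :
    √(2 * exp 1 * (β - 1)) / (2 * β * √π) * (β * u * exp (-β * u ^ 2 / 2)) ≤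
      1 / √(2 * π) * exp (-u ^ 2 / 2) := by
  have hconst : √(2 * exp 1 * (β - 1)) / (2 * β * √π) * β = √(exp 1 * (β - 1)) / √(2 * π) := by
    have h2 : √2 * √2 = 2 := mul_self_sqrt zero_le_two
    have : 0 < √2 := by positivity
    have : 0 < √π := sqrt_pos.2 pi_pos
    have : β ≠ 0 := by positivity
    rw [mul_assoc, sqrt_mul zero_le_two, sqrt_mul zero_le_two]
    field_simp
    linear_combination √(exp 1 * (β - 1)) * h2
  have hexp : exp (-β * u ^ 2 / 2) = exp (-((β - 1) * u ^ 2) / 2) * exp (-u ^ 2 / 2) := by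
    rw [← exp_add]; ring_nf
  calc _ = √(2 * exp 1 * (β - 1)) / (2 * β * √π) * β *
        (u * exp (-((β - 1) * u ^ 2) / 2) * exp (-u ^ 2 / 2)) := by rw [hexp]; ring
    _ = 1 / √(2 * π) * ((√(exp 1 * (β - 1)) * u * exp (-((β - 1) * u ^ 2) / 2)) *
        exp (-u ^ 2 / 2)) := by rw [hconst]; ring
    _ ≤ 1 / √(2 * π) * (1 * exp (-u ^ 2 / 2)) := by
        gcongr
        exact sqrt_exp_one_mul_mul_exp_le_one _ _ (by linarith)
    _ = _ := by rw [one_mul]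

/-- Lower bound on the standard Gaussian tail probability (Chang et al. 2011). -/
theorem stmt1 (β s : ℝ) (hβ : 1 < β) :
    Real.sqrt (2 * Real.exp 1 * (β - 1)) / (2 * β * Real.sqrt Real.pi) *
        Real.exp (-β * s ^ 2 / 2) ≤
      ∫ t in Set.Ioi s, (1 / Real.sqrt (2 * Real.pi)) * Real.exp (-t ^ 2 / 2) := by
  set K := √(2 * exp 1 * (β - 1)) / (2 * β * √π)
  have hderiv (u : ℝ) : HasDerivAt (fun v => -(K * exp (-β * v ^ 2 / 2)))
      (K * (β * u * exp (-β * u ^ 2 / 2))) u := by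
    refine ((((hasDerivAt_pow 2 u).const_mul (-β)).div_const 2).exp.const_mul K).neg.congr_deriv ?_
    push_cast
    ring
  have hlim : Tendsto (fun v => -(K * exp (-β * v ^ 2 / 2))) atTop (𝓝 0) := by
    have : Tendsto (fun v : ℝ => -β * v ^ 2 / 2) atTop atBot :=
      ((tendsto_pow_atTop two_ne_zero).const_mul_atTop_of_neg (by linarith)).atBot_div_const
        two_pos
    simpa using ((tendsto_exp_atBot.comp this).const_mul K).neg
  have hint : Integrable fun t : ℝ => 1 / √(2 * π) * exp (-t ^ 2 / 2) := by
    convert (integrable_exp_neg_mul_sq (b := 1 / 2) (by norm_num)).const_mul (1 / √(2 * π))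
      using 4
    ring
  simpa using sub_le_integral_Ioi_of_hasDerivAt_of_le (fun u _ => hderiv u) hint.integrableOn
    (fun u _ => const_mul_deriv_exp_neg_mul_sq_le_gaussian β u hβ.le) hlim
end

section
/- Let g : ℝ → ℝ be a polynomial with E_{t∼N(0,1)}[g(t)²] = 1 and let τ = max_{-2≤t≤2} |g(t)|. Then for every even integer i ≥ 1, E_{t∼N(0,1)}[(g(t)/(2τ))^i · (t² - 1)] ≥ 3·P_{t∼N(0,1)}[|g(t)| ≥ 2τ] − 2^{-i}. -/
/-!
On `[-2, 2]` we have `|g| ≤ τ`, so the integrand is at least `-(1/2)^i` there (as `t² - 1 ≥ -1`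
and `|g / 2τ| ≤ 1/2`). Outside `[-1, 1]` it is nonnegative, and where `|g| ≥ 2τ` we must have
`|t| > 2`, so the integrand is at least `1 · 3`. Hence it dominates `3 · 𝟙{|g| ≥ 2τ} - (1/2)^i`
pointwise; integrate. Here `τ > 0` because the normalization forces `g ≠ 0`, and a nonzero
polynomial cannot vanish on all of `[-2, 2]`.
-/

open MeasureTheory

/-- Standard Gaussian measure on ℝ. -/
noncomputable def stdGauss : Measure ℝ := ProbabilityTheory.gaussianReal 0 1

/-- Normalized probabilists' Hermite polynomial `He n`. -/
noncomputable def He (n : ℕ) (t : ℝ) : ℝ :=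
  (Polynomial.aeval t (Polynomial.hermite n)) / Real.sqrt (n.factorial)

/-- `k`-th normalized Hermite coefficient of `f` w.r.t. the standard Gaussian. -/
noncomputable def Hc (f : ℝ → ℝ) (k : ℕ) : ℝ := ∫ t, f t * He k t ∂stdGauss

open ProbabilityTheory Polynomial Set

instance isProbabilityMeasure_stdGauss : IsProbabilityMeasure stdGauss :=
  inferInstanceAs (IsProbabilityMeasure (gaussianReal 0 1))

lemma integrable_pow_gaussianReal (m : ℝ) (v : NNReal) (n : ℕ) :
    Integrable (fun x : ℝ => x ^ n) (gaussianReal m v) := by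
  have := (memLp_id_gaussianReal (μ := m) (v := v) n).integrable_norm_pow'
  exact (integrable_norm_iff (by fun_prop)).1 (by simpa only [norm_pow, id_eq] using this)

lemma Polynomial.integrable_eval_gaussianReal (p : ℝ[X]) (m : ℝ) (v : NNReal) :
    Integrable (fun x => p.eval x) (gaussianReal m v) := by
  simp_rw [eval_eq_sum_range]
  exact integrable_finsetSum _ fun k _ => (integrable_pow_gaussianReal m v k).const_mul _

lemma Polynomial.pos_of_isGreatest_abs_eval_image_Icc {g : ℝ[X]} {a b τ : ℝ} (hab : a < b)
    (hg : g ≠ 0) (hτ : IsGreatest ((fun t => |g.eval t|) '' Icc a b) τ) : 0 < τ := by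
  obtain ⟨⟨t₀, -, rfl⟩, hub⟩ := hτ
  refine (abs_nonneg _).lt_of_ne fun h => hg <| g.eq_zero_of_infinite_isRoot <|
    (Icc_infinite hab).mono fun t ht => ?_
  exact abs_nonpos_iff.1 (h ▸ hub ⟨t, ht, rfl⟩)

lemma ite_sub_le_div_pow_mul {τ x t : ℝ} {i : ℕ} (hτ : 0 < τ) (hi : Even i)
    (hx : |t| ≤ 2 → |x| ≤ τ) :
    (if 2 * τ ≤ |x| then (3 : ℝ) else 0) - (1 / 2) ^ i ≤ (x / (2 * τ)) ^ i * (t ^ 2 - 1) := by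
  have hhalf : (0 : ℝ) ≤ (1 / 2) ^ i := by positivity
  have hnonneg : 0 ≤ (x / (2 * τ)) ^ i := hi.pow_nonneg _
  have habs : |x / (2 * τ)| = |x| / (2 * τ) := by
    rw [abs_div, abs_of_pos (by positivity : (0 : ℝ) < 2 * τ)]
  split_ifs with hbig
  · have ht : 2 < |t| := lt_of_not_ge fun ht => by linarith [hx ht]
    have ht3 : 3 ≤ t ^ 2 - 1 := by nlinarith [sq_abs t]
    have hone : 1 ≤ (x / (2 * τ)) ^ i := by
      rw [← hi.pow_abs, habs]
      exact one_le_pow₀ ((one_le_div (by positivity)).2 hbig)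
    nlinarith
  · by_cases ht : 1 ≤ t ^ 2
    · nlinarith [mul_nonneg hnonneg (sub_nonneg.2 ht)]
    · have hsmall : |x / (2 * τ)| ≤ 1 / 2 := by
        rw [habs, div_le_iff₀ (by positivity)]
        linarith [hx (by nlinarith [sq_abs t, abs_nonneg t])]
      have hpow : (x / (2 * τ)) ^ i ≤ (1 / 2) ^ i :=
        hi.pow_abs (x / (2 * τ)) ▸ pow_le_pow_left₀ (abs_nonneg _) hsmall i
      nlinarith [sq_nonneg t]

theorem three_mul_measureReal_sub_le_integral {μ : Measure ℝ} [IsProbabilityMeasure μ]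
    {f : ℝ → ℝ} (hf : Measurable f) {τ : ℝ} (hτ : 0 < τ) (hbound : ∀ t, |t| ≤ 2 → |f t| ≤ τ)
    {i : ℕ} (hi : Even i) (hint : Integrable (fun t => (f t / (2 * τ)) ^ i * (t ^ 2 - 1)) μ) :
    3 * μ.real {t | 2 * τ ≤ |f t|} - (1 / 2) ^ i ≤ ∫ t, (f t / (2 * τ)) ^ i * (t ^ 2 - 1) ∂μ := by
  set A := {t | 2 * τ ≤ |f t|}
  have hA : MeasurableSet A := measurableSet_le measurable_const hf.abs
  have hlow : Integrable (fun t => A.indicator (fun _ => (3 : ℝ)) t - (1 / 2) ^ i) μ :=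
    ((integrable_const _).indicator hA).sub (integrable_const _)
  calc 3 * μ.real A - (1 / 2) ^ i
        = ∫ t, (A.indicator (fun _ => (3 : ℝ)) t - (1 / 2) ^ i) ∂μ := by
        rw [integral_sub ((integrable_const _).indicator hA) (integrable_const _),
          integral_indicator_const _ hA, integral_const, probReal_univ, smul_eq_mul, one_smul,
          mul_comm]
    _ ≤ _ := integral_mono hlow hint fun t => by
        simpa only [indicator_apply, A, mem_ofPred_eq] using
          ite_sub_le_div_pow_mul hτ hi (hbound t)

theorem stmt3_general (g : Polynomial ℝ) (hnorm : ∫ t, (g.eval t) ^ 2 ∂stdGauss = 1)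
    (τ : ℝ) (hτ : IsGreatest ((fun t => |g.eval t|) '' Set.Icc (-2 : ℝ) 2) τ)
    (i : ℕ) (hieven : Even i) :
    3 * (stdGauss {t | 2 * τ ≤ |g.eval t|}).toReal - (1 / 2 : ℝ) ^ i ≤
      ∫ t, (g.eval t / (2 * τ)) ^ i * (t ^ 2 - 1) ∂stdGauss := by
  have hg : g ≠ 0 := by
    rintro rfl
    simp at hnorm
  have hτpos : 0 < τ := g.pos_of_isGreatest_abs_eval_image_Icc (by norm_num) hg hτ
  have hint : Integrable (fun t => (g.eval t / (2 * τ)) ^ i * (t ^ 2 - 1)) stdGauss := by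
    refine (((C (2 * τ)⁻¹ * g) ^ i * (X ^ 2 - 1)).integrable_eval_gaussianReal 0 1).congr
      (ae_of_all _ fun t => ?_)
    simp [div_eq_inv_mul, mul_pow]
  exact three_mul_measureReal_sub_le_integral g.continuous.measurable hτpos
    (fun t ht => hτ.2 ⟨t, abs_le.1 ht, rfl⟩) hieven hint

/-- Key step: even powers of a normalized polynomial have a lower-bounded second
Hermite-type moment. -/
theorem stmt3 (g : Polynomial ℝ) (hnorm : ∫ t, (g.eval t) ^ 2 ∂stdGauss = 1)
    (τ : ℝ) (hτ : IsGreatest ((fun t => |g.eval t|) '' Set.Icc (-2 : ℝ) 2) τ)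
    (i : ℕ) (hi : 1 ≤ i) (hieven : Even i) :
    3 * (stdGauss {t | 2 * τ ≤ |g.eval t|}).toReal - (1 / 2 : ℝ) ^ i ≤
      ∫ t, (g.eval t / (2 * τ)) ^ i * (t ^ 2 - 1) ∂stdGauss :=
  stmt3_general g hnorm τ hτ i hieven
end

section
/- Let g : ℝ → ℝ be a nonconstant polynomial and τ = max_{t∈[-2,2]} |g(t)|. Then P_{t∼N(0,1)}[|g(t)| ≥ 2τ] > 0, and consequently there exists an even integer i such that E_{t∼N(0,1)}[g(t)^i·(t²−1)] > 0. -/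
/-! On `[-2, 2]` the weight `t² - 1` is at least `-1` and `|g| ≤ τ`, so this part of the integral
of `g^i (t² - 1)` is at least `-τ^i`. Outside `[-2, 2]` the weight is at least `3`, and the set
`{|g| ≥ 2τ}` lies there, so that part is at least `3 (2τ)^i P[|g| ≥ 2τ]`. This set has positive
Gaussian measure because `|g| → ∞`, so `3 (2τ)^i P[|g| ≥ 2τ] - τ^i > 0` for
large even `i`. -/

open MeasureTheory

open Set Polynomial ProbabilityTheory

theorem Polynomial.exists_mem_eval_ne_zero {R : Type*} [CommRing R] [IsDomain R] {P : R[X]}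
    (hP : P ≠ 0) {s : Set R} (hs : s.Infinite) : ∃ t ∈ s, P.eval t ≠ 0 := by
  by_contra! h
  exact hP (eq_zero_of_infinite_isRoot P (hs.mono h))

theorem Polynomial.integrable_eval {μ : Measure ℝ} [IsFiniteMeasure μ]
    (hμ : ∀ k : ℕ, MemLp id k μ) (P : ℝ[X]) : Integrable (fun t ↦ P.eval t) μ := by
  have hpow (k : ℕ) : Integrable (fun t : ℝ ↦ t ^ k) μ :=
    (hμ k).integrable_norm_pow'.mono' (continuous_pow k).aestronglyMeasurable
      (ae_of_all _ fun t ↦ (norm_pow t k).le)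
  simp_rw [eval_eq_sum_range]
  exact integrable_finsetSum _ fun k _ ↦ (hpow k).const_mul _

theorem ProbabilityTheory.gaussianReal_pos_of_volume_pos (m : ℝ) {v : NNReal} (hv : v ≠ 0)
    {s : Set ℝ} (hs : 0 < volume s) : 0 < gaussianReal m v s :=
  pos_iff_ne_zero.2 fun h ↦ hs.ne' (gaussianReal_absolutelyContinuous' m hv h)

theorem Polynomial.gaussianReal_setOf_le_abs_eval_pos (m : ℝ) {v : NNReal} (hv : v ≠ 0)
    {P : ℝ[X]} (hP : 0 < P.degree) (c : ℝ) : 0 < gaussianReal m v {t | c ≤ |P.eval t|} := by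
  obtain ⟨M, hM⟩ := Filter.eventually_atTop.1 ((P.abs_tendsto_atTop hP).eventually_ge_atTop c)
  refine (gaussianReal_pos_of_volume_pos m hv ?_).trans_le (measure_mono (s := Ici M) hM)
  simp

section WeightedMoment

variable {g : ℝ → ℝ} {τ : ℝ} {i : ℕ}

theorem indicator_sub_pow_le_pow_mul_sq_sub_one (hτ : 0 < τ)
    (hg : ∀ t ∈ Icc (-2 : ℝ) 2, |g t| ≤ τ) (hi : Even i) (t : ℝ) :
    {t | 2 * τ ≤ |g t|}.indicator (fun _ ↦ 3 * (2 * τ) ^ i) t - τ ^ i ≤ g t ^ i * (t ^ 2 - 1) := by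
  have hgi : 0 ≤ g t ^ i := hi.pow_nonneg _
  have hτi : 0 ≤ τ ^ i := by positivity
  by_cases ht : t ∈ Icc (-2 : ℝ) 2
  · have hle := hg t ht
    have hnot : t ∉ {t | 2 * τ ≤ |g t|} := fun h : 2 * τ ≤ |g t| ↦ by linarith
    have hgτ : g t ^ i ≤ τ ^ i := by
      rw [← hi.pow_abs]; exact pow_le_pow_left₀ (abs_nonneg _) hle i
    rw [indicator_of_notMem hnot]
    nlinarith [sq_nonneg t]
  · have h3 : 3 ≤ t ^ 2 - 1 := by
      simp only [mem_Icc, not_and_or, not_le] at ht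
      rcases ht with h | h <;> nlinarith
    by_cases hS : t ∈ {t | 2 * τ ≤ |g t|}
    · have h2τ : (2 * τ) ^ i ≤ g t ^ i := by
        rw [← hi.pow_abs (g t)]; exact pow_le_pow_left₀ (by positivity) hS i
      rw [indicator_of_mem hS]
      nlinarith
    · rw [indicator_of_notMem hS]
      nlinarith

theorem sub_pow_le_integral_pow_mul_sq_sub_one {μ : Measure ℝ} [IsProbabilityMeasure μ]
    (hτ : 0 < τ) (hg : ∀ t ∈ Icc (-2 : ℝ) 2, |g t| ≤ τ) (hgm : Measurable g) (hi : Even i)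
    (hint : Integrable (fun t ↦ g t ^ i * (t ^ 2 - 1)) μ) :
    3 * (2 * τ) ^ i * μ.real {t | 2 * τ ≤ |g t|} - τ ^ i ≤ ∫ t, g t ^ i * (t ^ 2 - 1) ∂μ := by
  have hS : MeasurableSet {t | 2 * τ ≤ |g t|} := measurableSet_le measurable_const hgm.abs
  calc 3 * (2 * τ) ^ i * μ.real {t | 2 * τ ≤ |g t|} - τ ^ i
      = ∫ t, ({t | 2 * τ ≤ |g t|}.indicator (fun _ ↦ 3 * (2 * τ) ^ i) t - τ ^ i) ∂μ := by
        rw [integral_sub ((integrable_const _).indicator hS) (integrable_const _),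
          integral_indicator_const _ hS, integral_const]
        simp [mul_comm]
    _ ≤ ∫ t, g t ^ i * (t ^ 2 - 1) ∂μ :=
        integral_mono (((integrable_const _).indicator hS).sub (integrable_const _)) hint
          (indicator_sub_pow_le_pow_mul_sq_sub_one hτ hg hi)

end WeightedMoment

/-- A nonconstant polynomial exceeds twice its max on [-2,2] with positive Gaussian
probability; hence some even power has positive second Hermite-type moment. -/
theorem stmt4 (g : Polynomial ℝ) (hg : 0 < g.natDegree)
    (τ : ℝ) (hτ : IsGreatest ((fun t => |g.eval t|) '' Set.Icc (-2 : ℝ) 2) τ) :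
    0 < (stdGauss {t | 2 * τ ≤ |g.eval t|}).toReal ∧
      ∃ i : ℕ, Even i ∧ 0 < ∫ t, g.eval t ^ i * (t ^ 2 - 1) ∂stdGauss := by
  unfold stdGauss
  have hbound : ∀ t ∈ Icc (-2 : ℝ) 2, |g.eval t| ≤ τ := fun t ht ↦ hτ.2 ⟨t, ht, rfl⟩
  have hτ_pos : 0 < τ := by
    obtain ⟨t, ht, hne⟩ := exists_mem_eval_ne_zero (ne_zero_of_natDegree_gt hg) (Icc_infinite
      (by norm_num : (-2 : ℝ) < 2))
    exact (abs_pos.2 hne).trans_le (hbound t ht)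
  set p := (gaussianReal 0 1).real {t | 2 * τ ≤ |g.eval t|}
  have hp : 0 < p := ENNReal.toReal_pos (gaussianReal_setOf_le_abs_eval_pos 0 one_ne_zero
    (natDegree_pos_iff_degree_pos.1 hg) (2 * τ)).ne' (measure_ne_top _ _)
  refine ⟨hp, ?_⟩
  obtain ⟨n, hn⟩ := pow_unbounded_of_one_lt (1 / (3 * p)) (by norm_num : (1 : ℝ) < 4)
  have hint : Integrable (fun t ↦ g.eval t ^ (2 * n) * (t ^ 2 - 1)) (gaussianReal 0 1) :=
    ((g ^ (2 * n) * (X ^ 2 - 1)).integrable_eval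
      fun k ↦ memLp_id_gaussianReal' k (ENNReal.natCast_ne_top k)).congr (by simp)
  refine ⟨2 * n, even_two_mul n, lt_of_lt_of_le ?_ (sub_pow_le_integral_pow_mul_sq_sub_one hτ_pos
    hbound g.continuous.measurable (even_two_mul n) hint)⟩
  have h3p : 1 < 4 ^ n * (3 * p) := by rwa [div_lt_iff₀ (by positivity)] at hn
  have hpow : (2 * τ) ^ (2 * n) = 4 ^ n * τ ^ (2 * n) := by rw [mul_pow, pow_mul]; norm_num
  have hτn : 0 < τ ^ (2 * n) := by positivity
  rw [hpow]
  nlinarith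
end

section
/- Let y = σ_*(z) where z ∼ N(0,1), and suppose there exists an orthonormal polynomial basis {φ_k}_{k≥0} of L²(P_y) with inner product ⟨f,g⟩ = E[f(y)g(y)]. If the generative exponent of σ_* is p_* (i.e., p_* = min over T ∈ L²(P_y) of IE(T∘σ_*)), then there exists a positive integer I such that IE(σ_*^I) = p_*. -/
/-!
Let `ζ ∈ L²(P_y)` represent `T ↦ E[T(σ_*(z)) He_{p_*}(z)]`, i.e. `ζ` is the adjoint of
`T ↦ T ∘ σ_*` applied to `He_{p_*}` (so `ζ(y) = E[He_{p_*}(z) | y]`). If every power `σ_*^I`,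
`I > 0`, had vanishing `p_*`-th Hermite coefficient then, as also `E[He_{p_*}] = 0`, `ζ` would be
orthogonal to every polynomial, in particular to every `φ_k`, hence `ζ = 0` by completeness; then
the `p_*`-th coefficient of `T ∘ σ_*` would vanish for every `T ∈ L²(P_y)`, which contradicts the
generative exponent being attained. So some `σ_*^I` has information exponent at most `p_*`, and
minimality of `p_*` gives equality. The powers `y^I` lie in `L²(P_y)` because the orthonormal
`φ_k` are linearly independent, hence of unbounded degree, and `|y|^I ≤ M + c |φ_k(y)|` as soon as
`deg φ_k ≥ I`.
-/

open MeasureTheory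

/-- The information exponent of h is exactly p. -/
def IEat (h : ℝ → ℝ) (p : ℕ) : Prop :=
  0 < p ∧ Hc h p ≠ 0 ∧ ∀ i, 0 < i → i < p → Hc h i = 0

open ProbabilityTheory Polynomial
open scoped NNReal

namespace Polynomial

lemma exists_norm_eval_le_of_degree_le {P Q : ℝ[X]} (h : P.degree ≤ Q.degree) :
    ∃ M c : ℝ, ∀ x, ‖P.eval x‖ ≤ M + c * ‖Q.eval x‖ := by
  obtain ⟨c, hc, hPQ⟩ := (isBigO_cobounded_of_degree_le h).exists_nonneg
  obtain ⟨r, -, hr⟩ := (Metric.hasBasis_cobounded_compl_closedBall 0).eventually_iff.1 hPQ.bound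
  obtain ⟨M, hM⟩ := (isCompact_closedBall (0 : ℝ) r).exists_bound_of_continuousOn
    P.continuous.continuousOn
  refine ⟨max M 0, c, fun x => ?_⟩
  have hcQ : 0 ≤ c * ‖Q.eval x‖ := by positivity
  by_cases hx : x ∈ Metric.closedBall 0 r
  · linarith [hM x hx, le_max_left M 0]
  · linarith [hr hx, le_max_right M 0]

lemma memLp_eval_of_degree_le {ν : Measure ℝ} [IsFiniteMeasure ν] {p : ENNReal} {P Q : ℝ[X]}
    (h : P.degree ≤ Q.degree) (hQ : MemLp (fun x => Q.eval x) p ν) :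
    MemLp (fun x => P.eval x) p ν := by
  obtain ⟨M, c, hM⟩ := exists_norm_eval_le_of_degree_le h
  exact ((memLp_const M).add (hQ.norm.const_mul c)).of_le P.continuous.aestronglyMeasurable
    (.of_forall fun x => (hM x).trans (le_abs_self _))

lemma exists_le_natDegree_of_linearIndependent {K ι : Type*} [Field K] [Infinite ι]
    {P : ι → K[X]} (hP : LinearIndependent K P) (D : ℕ) : ∃ k, D ≤ (P k).natDegree := by
  by_contra! hlt
  have hmem (k : ι) : P k ∈ degreeLT K D :=
    mem_degreeLT.2 (degree_le_natDegree.trans_lt (by exact_mod_cast hlt k))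
  have : LinearIndependent K fun k => (⟨P k, hmem k⟩ : degreeLT K D) :=
    .of_comp (degreeLT K D).subtype hP
  exact not_finite_iff_infinite.2 ‹_› this.finite

end Polynomial

namespace MeasureTheory

variable {α β : Type*} [MeasurableSpace α] [MeasurableSpace β] {μ : Measure α}

lemma memLp_two_of_integral_mul_self_ne_zero {f : α → ℝ} (hf : AEStronglyMeasurable f μ)
    (h : ∫ x, f x * f x ∂μ ≠ 0) : MemLp f 2 μ :=
  (memLp_two_iff_integrable_sq hf).2 (by simpa only [sq] using Integrable.of_integral_ne_zero h)

lemma linearIndependent_of_integral_mul_eq_ite {ι : Type*} [DecidableEq ι] {φ : ι → α → ℝ}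
    (hφ : ∀ k, MemLp (φ k) 2 μ)
    (horth : ∀ k l, ∫ x, φ k x * φ l x ∂μ = if k = l then 1 else 0) :
    LinearIndependent ℝ φ := by
  refine linearIndependent_iff'.2 fun s g hg i hi => ?_
  have hint (k : ι) : Integrable (fun x => g k * (φ k x * φ i x)) μ :=
    ((hφ k).integrable_mul (hφ i)).const_mul (g k)
  calc g i = ∑ k ∈ s, ∫ x, g k * (φ k x * φ i x) ∂μ := by
        simp only [integral_const_mul, horth, mul_ite, mul_one, mul_zero, Finset.sum_ite_eq', hi,
          if_true]
    _ = ∫ x, ∑ k ∈ s, g k * (φ k x * φ i x) ∂μ := (integral_finsetSum _ fun k _ => hint k).symm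
    _ = ∫ x, (∑ k ∈ s, g k • φ k) x * φ i x ∂μ := by
        simp only [Finset.sum_apply, Pi.smul_apply, smul_eq_mul, Finset.sum_mul, mul_assoc]
    _ = 0 := by simp only [hg, Pi.zero_apply, zero_mul, integral_zero]

lemma memLp_pow_of_integral_mul_eq_ite {ν : Measure ℝ} [IsFiniteMeasure ν] {φ : ℕ → ℝ → ℝ}
    (hpoly : ∀ k, ∃ P : ℝ[X], ∀ y, φ k y = P.eval y)
    (horth : ∀ k l, ∫ y, φ k y * φ l y ∂ν = if k = l then 1 else 0) (j : ℕ) :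
    MemLp (fun y => y ^ j) 2 ν := by
  choose P hP using hpoly
  have hφ : φ = fun k y => (P k).eval y := funext₂ hP
  subst hφ
  have hL2 (k : ℕ) : MemLp (fun y => (P k).eval y) 2 ν :=
    memLp_two_of_integral_mul_self_ne_zero (P k).continuous.aestronglyMeasurable
      (by simp [horth])
  have hP : LinearIndependent ℝ P :=
    .of_comp (LinearMap.pi fun y => leval y) (linearIndependent_of_integral_mul_eq_ite hL2 horth)
  obtain ⟨k, hk⟩ := exists_le_natDegree_of_linearIndependent hP j
  have hdeg : (X ^ j : ℝ[X]).degree ≤ (P k).degree := by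
    rw [degree_X_pow, degree_eq_natDegree (hP.ne_zero k)]
    exact_mod_cast hk
  simpa using memLp_eval_of_degree_le hdeg (hL2 k)

lemma exists_memLp_integral_mul_eq_integral_comp_mul {σ : α → β} (hσ : Measurable σ)
    {h : α → ℝ} (hh : MemLp h 2 μ) : ∃ g : β → ℝ, MemLp g 2 (μ.map σ) ∧
      ∀ f, MemLp f 2 (μ.map σ) → ∫ y, f y * g y ∂μ.map σ = ∫ x, f (σ x) * h x ∂μ := by
  let V := (Lp.compMeasurePreservingₗᵢ ℝ σ ⟨hσ, rfl⟩ :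
    Lp ℝ 2 (μ.map σ) →ₗᵢ[ℝ] Lp ℝ 2 μ).toContinuousLinearMap
  refine ⟨V.adjoint (hh.toLp h), Lp.memLp _, fun f hf => ?_⟩
  have key := V.adjoint_inner_left (hf.toLp f) (hh.toLp h)
  simp only [L2.inner_def, RCLike.inner_apply, conj_trivial] at key
  calc ∫ y, f y * (V.adjoint (hh.toLp h) : β → ℝ) y ∂μ.map σ
      = ∫ y, (hf.toLp f : β → ℝ) y * (V.adjoint (hh.toLp h) : β → ℝ) y ∂μ.map σ :=
        integral_congr_ae (by filter_upwards [hf.coeFn_toLp] with y hy; rw [hy])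
    _ = ∫ x, (V (hf.toLp f) : α → ℝ) x * (hh.toLp h : α → ℝ) x ∂μ := key
    _ = ∫ x, f (σ x) * h x ∂μ := by
        refine integral_congr_ae ?_
        filter_upwards [Lp.coeFn_compMeasurePreserving (hf.toLp f) ⟨hσ, rfl⟩,
          ae_eq_comp hσ.aemeasurable hf.coeFn_toLp, hh.coeFn_toLp] with x h1 h2 h3
        exact congr($(h1.trans h2) * $h3)

lemma memLp_eval_comp {f : α → ℝ} (hpow : ∀ j, MemLp (fun x => f x ^ j) 2 μ) (P : ℝ[X]) :
    MemLp (fun x => P.eval (f x)) 2 μ := by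
  induction P using Polynomial.induction_on' with
  | add P Q hP hQ => simp only [eval_add]; exact hP.add hQ
  | monomial n a => simpa only [eval_monomial] using (hpow n).const_mul a

lemma integral_eval_comp_mul_eq_zero {f h : α → ℝ} (hpow : ∀ j, MemLp (fun x => f x ^ j) 2 μ)
    (hh : MemLp h 2 μ) (hmom : ∀ j, ∫ x, f x ^ j * h x ∂μ = 0) (P : ℝ[X]) :
    ∫ x, P.eval (f x) * h x ∂μ = 0 := by
  have hint (P : ℝ[X]) : Integrable (fun x => P.eval (f x) * h x) μ :=
    (memLp_eval_comp hpow P).integrable_mul hh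
  induction P using Polynomial.induction_on' with
  | add P Q hP hQ =>
    simp only [eval_add, add_mul, integral_add (hint P) (hint Q), hP, hQ, add_zero]
  | monomial n a => simp only [eval_monomial, mul_assoc, integral_const_mul, hmom, mul_zero]

lemma integral_comp_mul_eq_zero_of_integral_pow_mul_eq_zero {σ : α → ℝ} (hσ : Measurable σ)
    {φ : ℕ → ℝ → ℝ} (hpoly : ∀ k, ∃ P : ℝ[X], ∀ y, φ k y = P.eval y)
    (htotal : ∀ f : ℝ → ℝ, MemLp f 2 (μ.map σ) →
      (∀ k, ∫ y, f y * φ k y ∂μ.map σ = 0) → f =ᵐ[μ.map σ] 0)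
    (hpow : ∀ j, MemLp (fun y => y ^ j) 2 (μ.map σ)) {h : α → ℝ} (hh : MemLp h 2 μ)
    (hmom : ∀ j, ∫ x, σ x ^ j * h x ∂μ = 0) {T : ℝ → ℝ} (hT : MemLp T 2 (μ.map σ)) :
    ∫ x, T (σ x) * h x ∂μ = 0 := by
  obtain ⟨g, hg, hgh⟩ := exists_memLp_integral_mul_eq_integral_comp_mul hσ hh
  have hpowμ (j : ℕ) : MemLp (fun x => σ x ^ j) 2 μ :=
    (hpow j).comp_measurePreserving ⟨hσ, rfl⟩
  have hg0 : g =ᵐ[μ.map σ] 0 := htotal g hg fun k => by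
    obtain ⟨P, hP⟩ := hpoly k
    simp_rw [hP, mul_comm (g _)]
    rw [hgh (fun y => P.eval y) (memLp_eval_comp (f := id) hpow P)]
    exact integral_eval_comp_mul_eq_zero hpowμ hh hmom P
  rw [← hgh T hT]
  exact integral_eq_zero_of_ae (by filter_upwards [hg0] with y hy; simp [hy])

end MeasureTheory

namespace ProbabilityTheory

variable {μ : ℝ} {v : ℝ≥0}

lemma integrable_eval_gaussianReal (P : ℝ[X]) :
    Integrable (fun x => P.eval x) (gaussianReal μ v) := by
  induction P using Polynomial.induction_on' with
  | add p q hp hq => simpa only [eval_add] using hp.fun_add hq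
  | monomial n a =>
    have hpow : Integrable (fun x : ℝ => x ^ n) (gaussianReal μ v) :=
      ((memLp_id_gaussianReal n).integrable_norm_pow').mono (by fun_prop)
        (.of_forall fun x => by simp)
    simpa using hpow.const_mul a

lemma memLp_eval_gaussianReal (P : ℝ[X]) : MemLp (fun x => P.eval x) 2 (gaussianReal μ v) :=
  (memLp_two_iff_integrable_sq (by fun_prop)).2 <| by
    simpa only [eval_mul, sq] using integrable_eval_gaussianReal (μ := μ) (v := v) (P * P)

lemma hasDerivAt_gaussianPDFReal (x : ℝ) :
    HasDerivAt (gaussianPDFReal μ v) (-((x - μ) / v) * gaussianPDFReal μ v x) x := by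
  have h : HasDerivAt (fun x => -(x - μ) ^ 2 / (2 * v)) (-((x - μ) / v)) x := by
    have := (((hasDerivAt_id x).sub_const μ).fun_pow 2).fun_neg.div_const (2 * (v : ℝ))
    simp only [id, Nat.cast_ofNat, pow_one, mul_one, Nat.add_one_sub_one] at this
    rwa [neg_div, mul_div_mul_left _ _ two_ne_zero] at this
  refine (h.exp.const_mul (√(2 * Real.pi * v))⁻¹).congr_deriv ?_
  simp only [gaussianPDFReal]; ring

lemma integrable_gaussianReal_iff (hv : v ≠ 0) {f : ℝ → ℝ} :
    Integrable f (gaussianReal μ v) ↔ Integrable (fun x => gaussianPDFReal μ v x * f x) := by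
  rw [gaussianReal_of_var_ne_zero μ hv, integrable_withDensity_iff_integrable_smul'
    (measurable_gaussianPDF μ v) (.of_forall fun _ => gaussianPDF_lt_top)]
  simp only [toReal_gaussianPDF, smul_eq_mul]

/-- Stein's identity for polynomial test functions. -/
lemma integral_sub_mul_eval_gaussianReal (Q : ℝ[X]) :
    ∫ x, (x - μ) * Q.eval x ∂gaussianReal μ v =
      v * ∫ x, (derivative Q).eval x ∂gaussianReal μ v := by
  by_cases hv : v = 0
  · subst hv; simp
  have hint (P : ℝ[X]) : Integrable (fun x => gaussianPDFReal μ v x * P.eval x) :=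
    (integrable_gaussianReal_iff hv).1 (integrable_eval_gaussianReal P)
  have hderiv (x : ℝ) : HasDerivAt (fun x => gaussianPDFReal μ v x * Q.eval x)
      (gaussianPDFReal μ v x * (derivative Q).eval x
        - gaussianPDFReal μ v x * ((X - C μ) * Q).eval x / v) x := by
    refine ((hasDerivAt_gaussianPDFReal x).mul (Q.hasDerivAt x)).congr_deriv ?_
    simp only [eval_mul, eval_sub, eval_X, eval_C]; ring
  have h := integral_eq_zero_of_hasDerivAt_of_integrable hderiv
    ((hint _).sub ((hint _).div_const _)) (hint Q)
  rw [integral_sub (hint _) ((hint _).div_const _), integral_div, sub_eq_zero,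
    eq_div_iff (mod_cast hv)] at h
  simp only [integral_gaussianReal_eq_integral_smul hv, smul_eq_mul]
  simpa [mul_comm] using h.symm

lemma integral_aeval_hermite_gaussianReal {n : ℕ} (hn : n ≠ 0) :
    ∫ x, aeval x (hermite n) ∂gaussianReal 0 1 = 0 := by
  obtain ⟨m, rfl⟩ := Nat.exists_eq_succ_of_ne_zero hn
  set H := (hermite m).map (Int.castRingHom ℝ)
  have hH (x : ℝ) : aeval x (hermite (m + 1)) = (x - 0) * H.eval x - (derivative H).eval x := by
    simp [H, hermite_succ, aeval_def, eval₂_eq_eval_map, derivative_map]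
  simp only [hH]
  rw [integral_sub, integral_sub_mul_eval_gaussianReal, NNReal.coe_one, one_mul, sub_self]
  · exact (integrable_eval_gaussianReal (X * H)).congr (.of_forall fun x => by simp)
  · exact integrable_eval_gaussianReal _

end ProbabilityTheory

instance : IsProbabilityMeasure stdGauss := by
  unfold stdGauss; infer_instance

lemma memLp_He (n : ℕ) : MemLp (He n) 2 stdGauss := by
  have hHe :
      He n = fun t => (√n.factorial)⁻¹ * ((hermite n).map (Int.castRingHom ℝ)).eval t := by
    ext t; simp [He, aeval_def, eval₂_eq_eval_map, div_eq_inv_mul]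
  rw [hHe]
  exact (memLp_eval_gaussianReal _).const_mul _

lemma integral_He_stdGauss {n : ℕ} (hn : n ≠ 0) : ∫ t, He n t ∂stdGauss = 0 := by
  simp only [He, integral_div, stdGauss, integral_aeval_hermite_gaussianReal hn, zero_div]

lemma exists_IEat_le_of_Hc_ne_zero {h : ℝ → ℝ} {p : ℕ} (hp : 0 < p) (hc : Hc h p ≠ 0) :
    ∃ q ≤ p, IEat h q := by
  classical
  have hex : ∃ i, 0 < i ∧ Hc h i ≠ 0 := ⟨p, hp, hc⟩
  refine ⟨Nat.find hex, Nat.find_le ⟨hp, hc⟩, (Nat.find_spec hex).1, (Nat.find_spec hex).2,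
    fun i hi hlt => ?_⟩
  by_contra hne
  exact Nat.find_min hex hlt ⟨hi, hne⟩

/-- If the label distribution admits an orthonormal polynomial basis of its L^2 space,
then some power of the link function attains the generative exponent as its
information exponent. -/
theorem stmt17 (σs : ℝ → ℝ) (hmeas : Measurable σs)
    (Py : Measure ℝ) (hPy : Py = Measure.map σs stdGauss)
    (φ : ℕ → ℝ → ℝ) (hpoly : ∀ k, ∃ P : Polynomial ℝ, ∀ y, φ k y = P.eval y)
    (horth : ∀ k l, ∫ y, φ k y * φ l y ∂Py = if k = l then 1 else 0)
    (htotal : ∀ f : ℝ → ℝ, MemLp f 2 Py →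
      (∀ k, ∫ y, f y * φ k y ∂Py = 0) → f =ᵐ[Py] 0)
    (ps : ℕ)
    (hGE1 : ∃ T : ℝ → ℝ, MemLp T 2 Py ∧ IEat (fun z => T (σs z)) ps)
    (hGE2 : ∀ T : ℝ → ℝ, MemLp T 2 Py → ∀ p', IEat (fun z => T (σs z)) p' → ps ≤ p') :
    ∃ I : ℕ, 0 < I ∧ IEat (fun z => σs z ^ I) ps := by
  subst hPy
  obtain ⟨T, hT, hps, hTps, -⟩ := hGE1
  have hpow := memLp_pow_of_integral_mul_eq_ite hpoly horth
  obtain ⟨I, hI, hcI⟩ : ∃ I, 0 < I ∧ Hc (fun z => σs z ^ I) ps ≠ 0 := by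
    by_contra! hzero
    refine hTps (integral_comp_mul_eq_zero_of_integral_pow_mul_eq_zero hmeas hpoly htotal hpow
      (memLp_He ps) (fun j => ?_) hT)
    rcases j.eq_zero_or_pos with rfl | hj
    · simpa using integral_He_stdGauss hps.ne'
    · exact hzero j hj
  obtain ⟨q, hqps, hq⟩ := exists_IEat_le_of_Hc_ne_zero hps hcI
  exact ⟨I, hI, le_antisymm hqps (hGE2 _ (hpow I) q hq) ▸ hq⟩
end

section
/- Let ψ : ℝ^d → ℝ^N be measurable with E_x[‖ψ(x)‖⁴] < ∞, and let x_1,…,x_T be i.i.d. samples. Then E[ sup_{‖a‖≤1} | (1/T)Σ_{i=1}^T (a^⊤ψ(x_i))² − E_x[(a^⊤ψ(x))²] | ] ≤ 2√( E_x[‖ψ(x)‖⁴] / T ). -/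
/-!
Write `Σ̂` and `Σ` for the empirical and population second-moment matrices of `ψ`. The deviation
at `a` is `aᵀ (Σ̂ - Σ) a`, which Cauchy–Schwarz bounds by the Frobenius norm `‖Σ̂ - Σ‖_F` uniformly
over the unit ball. Each entry of `Σ̂ - Σ` is a centred empirical mean of `T` independent copies
of `ψ_j ψ_k`, so its mean square is `Var(ψ_j ψ_k) / T ≤ E[(ψ_j ψ_k)²] / T`; summing over `j, k`
gives `E ‖Σ̂ - Σ‖_F² ≤ E ‖ψ‖⁴ / T`, and Jensen's inequality for `√` concludes.
-/

open MeasureTheory ProbabilityTheory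

theorem Real.sqrt_le_one_add_norm (x : ℝ) : √x ≤ 1 + ‖x‖ := by
  rcases le_total 0 x with hx | hx
  · nlinarith [Real.sq_sqrt hx, Real.sqrt_nonneg x, le_abs_self x, Real.norm_eq_abs x]
  · rw [Real.sqrt_eq_zero_of_nonpos hx]; positivity

section Sqrt

variable {Ω : Type*} [MeasurableSpace Ω] {μ : Measure Ω} {h : Ω → ℝ}

theorem MeasureTheory.Integrable.sqrt [IsFiniteMeasure μ] (hh : Integrable h μ) :
    Integrable (fun ω => √(h ω)) μ :=
  ((integrable_const 1).add hh.norm).mono'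
    (Real.continuous_sqrt.comp_aestronglyMeasurable hh.aestronglyMeasurable)
    (.of_forall fun ω => (Real.norm_of_nonneg (Real.sqrt_nonneg _)).trans_le
      (Real.sqrt_le_one_add_norm (h ω)))

theorem integral_sqrt_le_sqrt_integral [IsProbabilityMeasure μ] (h_nonneg : 0 ≤ᵐ[μ] h)
    (hh : Integrable h μ) : ∫ ω, √(h ω) ∂μ ≤ √(∫ ω, h ω ∂μ) :=
  Real.strictConcaveOn_sqrt.concaveOn.le_map_integral Real.continuous_sqrt.continuousOn
    isClosed_Ici h_nonneg hh hh.sqrt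

end Sqrt

theorem abs_sum_mul_mul_le_sqrt_sum_sq {ι : Type*} [Fintype ι] {a : ι → ℝ}
    (ha : ∑ j, a j ^ 2 ≤ 1) (M : ι → ι → ℝ) :
    |∑ j, ∑ k, a j * a k * M j k| ≤ √(∑ j, ∑ k, M j k ^ 2) := by
  refine Real.abs_le_sqrt ?_
  have hcs := Finset.sum_mul_sq_le_sq_mul_sq Finset.univ (fun p : ι × ι => a p.1 * a p.2)
    (fun p => M p.1 p.2)
  simp only [← Finset.univ_product_univ, Finset.sum_product] at hcs
  have ha2 : ∑ j, ∑ k, (a j * a k) ^ 2 ≤ 1 := by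
    simp_rw [mul_pow, ← Finset.mul_sum, ← Finset.sum_mul]
    nlinarith [Finset.sum_nonneg fun j (_ : j ∈ Finset.univ) => sq_nonneg (a j)]
  have hM : 0 ≤ ∑ j, ∑ k, M j k ^ 2 := by positivity
  nlinarith

theorem sq_sum_mul_eq_sum_sum {ι : Type*} [Fintype ι] (a v : ι → ℝ) :
    (∑ j, a j * v j) ^ 2 = ∑ j, ∑ k, a j * a k * (v j * v k) := by
  rw [sq, Finset.sum_mul_sum]
  exact Fintype.sum_congr _ _ fun j => Fintype.sum_congr _ _ fun k => by ring

theorem sum_sum_sq_mul_eq_sq_sum_sq {ι : Type*} [Fintype ι] (v : ι → ℝ) :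
    ∑ j, ∑ k, (v j * v k) ^ 2 = (∑ j, v j ^ 2) ^ 2 := by
  rw [sq (∑ j, v j ^ 2), Finset.sum_mul_sum]
  exact Fintype.sum_congr _ _ fun j => Fintype.sum_congr _ _ fun k => by ring

noncomputable def empiricalMean {E : Type*} {T : ℕ} (f : E → ℝ) (xs : Fin T → E) : ℝ :=
  (T : ℝ)⁻¹ * ∑ i, f (xs i)

section EmpiricalMean

variable {E : Type*} [MeasurableSpace E] {ρ : Measure E} [IsProbabilityMeasure ρ] {T : ℕ}
  {f : E → ℝ}

theorem memLp_empiricalMean (hf : MemLp f 2 ρ) :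
    MemLp (empiricalMean f) 2 (Measure.pi fun _ : Fin T => ρ) :=
  (memLp_finsetSum _ fun i _ => hf.comp_measurePreserving (measurePreserving_eval _ i)).const_mul _

theorem integral_empiricalMean (hT : 0 < T) (hf : Integrable f ρ) :
    ∫ xs, empiricalMean f xs ∂(Measure.pi fun _ : Fin T => ρ) = ∫ x, f x ∂ρ := by
  have hT' : (T : ℝ) ≠ 0 := by positivity
  have hi (i : Fin T) : ∫ xs : Fin T → E, f (xs i) ∂(Measure.pi fun _ => ρ) = ∫ x, f x ∂ρ :=
    integral_comp_eval (μ := fun _ => ρ) hf.aestronglyMeasurable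
  simp only [empiricalMean, integral_const_mul]
  rw [integral_finsetSum _ fun i _ => integrable_comp_eval hf]
  simp only [hi, Finset.sum_const, Finset.card_univ, Fintype.card_fin, nsmul_eq_mul]
  field_simp

theorem variance_empiricalMean (hf : MemLp f 2 ρ) :
    Var[empiricalMean f; Measure.pi fun _ : Fin T => ρ] = Var[f; ρ] / T := by
  have hsum := variance_sum_pi (μ := fun _ : Fin T => ρ) (X := fun _ => f) fun _ => hf
  simp only [Finset.sum_const, Finset.card_univ, Fintype.card_fin, nsmul_eq_mul] at hsum
  unfold empiricalMean
  rw [variance_const_mul, ← Finset.sum_fn, hsum]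
  rcases eq_or_ne (T : ℝ) 0 with hT | hT
  · simp [hT]
  · field_simp

theorem integrable_empiricalMean_sub_sq (hf : MemLp f 2 ρ) (c : ℝ) :
    Integrable (fun xs => (empiricalMean f xs - c) ^ 2) (Measure.pi fun _ : Fin T => ρ) :=
  ((memLp_empiricalMean hf).sub (memLp_const c)).integrable_sq

theorem integral_empiricalMean_sub_sq (hT : 0 < T) (hf : MemLp f 2 ρ) :
    ∫ xs, (empiricalMean f xs - ∫ x, f x ∂ρ) ^ 2 ∂(Measure.pi fun _ : Fin T => ρ)
      = Var[f; ρ] / T := by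
  rw [← variance_empiricalMean hf, variance_eq_integral (memLp_empiricalMean hf).aemeasurable,
    integral_empiricalMean hT (hf.integrable one_le_two)]

end EmpiricalMean

section Features

variable {E : Type*} [MeasurableSpace E] {ρ : Measure E} {T : ℕ} {ι : Type*} [Fintype ι]
  {ψ : E → ι → ℝ}

theorem memLp_mul_apply_of_integrable_sq_sum_sq (hψ : Measurable ψ)
    (hmom : Integrable (fun x => (∑ j, ψ x j ^ 2) ^ 2) ρ) (j k : ι) :
    MemLp (fun x => ψ x j * ψ x k) 2 ρ := by
  have hmeas : Measurable fun x => ψ x j * ψ x k :=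
    ((measurable_pi_apply j).comp hψ).mul ((measurable_pi_apply k).comp hψ)
  refine (memLp_two_iff_integrable_sq hmeas.aestronglyMeasurable).2
    (hmom.mono (hmeas.pow_const 2).aestronglyMeasurable (.of_forall fun x => ?_))
  rw [Real.norm_of_nonneg (sq_nonneg _), Real.norm_of_nonneg (sq_nonneg _),
    ← sum_sum_sq_mul_eq_sq_sum_sq]
  exact (Finset.single_le_sum (fun k _ => sq_nonneg (ψ x j * ψ x k)) (Finset.mem_univ k)).trans
    (Finset.single_le_sum (f := fun j => ∑ k, (ψ x j * ψ x k) ^ 2)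
      (fun j _ => by positivity) (Finset.mem_univ j))

theorem empiricalMean_sq_sub_integral_sq
    (hint : ∀ j k, Integrable (fun x => ψ x j * ψ x k) ρ) (a : ι → ℝ) (xs : Fin T → E) :
    empiricalMean (fun x => (∑ j, a j * ψ x j) ^ 2) xs - ∫ x, (∑ j, a j * ψ x j) ^ 2 ∂ρ
      = ∑ j, ∑ k, a j * a k *
          (empiricalMean (fun x => ψ x j * ψ x k) xs - ∫ x, ψ x j * ψ x k ∂ρ) := by
  simp only [sq_sum_mul_eq_sum_sum a, empiricalMean, mul_sub, Finset.sum_sub_distrib]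
  rw [integral_finsetSum _ fun j _ => integrable_finsetSum _ fun k _ => (hint j k).const_mul _]
  simp only [integral_finsetSum _ fun k _ => (hint _ k).const_mul _, integral_const_mul]
  congr 1
  simp only [Finset.mul_sum]
  rw [Finset.sum_comm]
  refine Fintype.sum_congr _ _ fun j => ?_
  rw [Finset.sum_comm]
  exact Fintype.sum_congr _ _ fun k => Fintype.sum_congr _ _ fun i => by ring

/-- `‖Σ̂ - Σ‖_F²`. -/
noncomputable def sqFrobeniusDeviation (ρ : Measure E) (ψ : E → ι → ℝ) (xs : Fin T → E) : ℝ :=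
  ∑ j, ∑ k, (empiricalMean (fun x => ψ x j * ψ x k) xs - ∫ x, ψ x j * ψ x k ∂ρ) ^ 2

theorem iSup_abs_empiricalMean_sq_sub_integral_le_sqrt
    (hint : ∀ j k, Integrable (fun x => ψ x j * ψ x k) ρ) (xs : Fin T → E) :
    ⨆ a : {a : ι → ℝ // ∑ j, a j ^ 2 ≤ 1},
        |empiricalMean (fun x => (∑ j, a.1 j * ψ x j) ^ 2) xs - ∫ x, (∑ j, a.1 j * ψ x j) ^ 2 ∂ρ|
      ≤ √(sqFrobeniusDeviation ρ ψ xs) := by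
  have : Nonempty {a : ι → ℝ // ∑ j, a j ^ 2 ≤ 1} := ⟨⟨0, by simp⟩⟩
  refine ciSup_le fun a => ?_
  rw [empiricalMean_sq_sub_integral_sq hint]
  exact abs_sum_mul_mul_le_sqrt_sum_sq a.2 _

variable [IsProbabilityMeasure ρ]

theorem integrable_sqFrobeniusDeviation (hψ : Measurable ψ)
    (hmom : Integrable (fun x => (∑ j, ψ x j ^ 2) ^ 2) ρ) :
    Integrable (sqFrobeniusDeviation (T := T) ρ ψ) (Measure.pi fun _ : Fin T => ρ) :=
  integrable_finsetSum _ fun j _ => integrable_finsetSum _ fun k _ =>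
    integrable_empiricalMean_sub_sq (memLp_mul_apply_of_integrable_sq_sum_sq hψ hmom j k) _

theorem integral_sqFrobeniusDeviation_le (hT : 0 < T) (hψ : Measurable ψ)
    (hmom : Integrable (fun x => (∑ j, ψ x j ^ 2) ^ 2) ρ) :
    ∫ xs, sqFrobeniusDeviation ρ ψ xs ∂(Measure.pi fun _ : Fin T => ρ)
      ≤ (∫ x, (∑ j, ψ x j ^ 2) ^ 2 ∂ρ) / T := by
  have hL2 := memLp_mul_apply_of_integrable_sq_sum_sq hψ hmom
  have hsq (j k : ι) := (hL2 j k).integrable_sq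
  have hdev (j k : ι) :=
    integrable_empiricalMean_sub_sq (T := T) (hL2 j k) (∫ x, ψ x j * ψ x k ∂ρ)
  unfold sqFrobeniusDeviation
  rw [integral_finsetSum _ fun j _ => integrable_finsetSum _ fun k _ => hdev j k]
  simp only [integral_finsetSum _ fun k _ => hdev _ k, integral_empiricalMean_sub_sq hT (hL2 _ _)]
  calc ∑ j, ∑ k, Var[fun x => ψ x j * ψ x k; ρ] / T
      ≤ ∑ j, ∑ k, (∫ x, (ψ x j * ψ x k) ^ 2 ∂ρ) / T := by
        gcongr with j _ k _
        exact variance_le_expectation_sq (hL2 j k).aestronglyMeasurable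
    _ = (∫ x, (∑ j, ψ x j ^ 2) ^ 2 ∂ρ) / T := by
        simp only [← sum_sum_sq_mul_eq_sq_sum_sq, ← Finset.sum_div]
        rw [integral_finsetSum _ fun j _ => integrable_finsetSum _ fun k _ => hsq j k]
        simp only [integral_finsetSum _ fun k _ => hsq _ k]

end Features

theorem stmt18_general {E : Type*} [MeasurableSpace E] (ρ : Measure E) [IsProbabilityMeasure ρ]
    (N T : ℕ) (hT : 0 < T) (ψ : E → Fin N → ℝ) (hψ : Measurable ψ)
    (hmom : Integrable (fun x => (∑ j, ψ x j ^ 2) ^ 2) ρ)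
    (G : (Fin T → E) → ℝ)
    (hG : ∀ xs, G xs = ⨆ a : {a : Fin N → ℝ // ∑ j, a j ^ 2 ≤ 1},
      |(1 / (T : ℝ)) * ∑ i, (∑ j, a.1 j * ψ (xs i) j) ^ 2 -
        ∫ x, (∑ j, a.1 j * ψ x j) ^ 2 ∂ρ|) :
    ∫ xs, G xs ∂(Measure.pi fun _ : Fin T => ρ) ≤
      2 * Real.sqrt ((∫ x, (∑ j, ψ x j ^ 2) ^ 2 ∂ρ) / T) := by
  set P := Measure.pi fun _ : Fin T => ρ
  set C := (∫ x, (∑ j, ψ x j ^ 2) ^ 2 ∂ρ) / T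
  have hint j k := (memLp_mul_apply_of_integrable_sq_sum_sq hψ hmom j k).integrable one_le_two
  have hG_le (xs : Fin T → E) : G xs ≤ √(sqFrobeniusDeviation ρ ψ xs) := by
    rw [hG, one_div]
    exact iSup_abs_empiricalMean_sq_sub_integral_le_sqrt hint xs
  have hG_nonneg (xs : Fin T → E) : 0 ≤ G xs :=
    (hG xs).symm ▸ Real.iSup_nonneg fun _ => abs_nonneg _
  have hD := integrable_sqFrobeniusDeviation (T := T) hψ hmom
  calc ∫ xs, G xs ∂P
      ≤ ∫ xs, √(sqFrobeniusDeviation ρ ψ xs) ∂P :=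
        integral_mono_of_nonneg (.of_forall hG_nonneg) hD.sqrt (.of_forall hG_le)
    _ ≤ √(∫ xs, sqFrobeniusDeviation ρ ψ xs ∂P) :=
        integral_sqrt_le_sqrt_integral
          (.of_forall fun _ => by unfold sqFrobeniusDeviation; positivity) hD
    _ ≤ √C := Real.sqrt_le_sqrt (integral_sqFrobeniusDeviation_le hT hψ hmom)
    _ ≤ 2 * √C := by linarith [Real.sqrt_nonneg C]

/-- Uniform deviation bound over the unit ball for empirical second moments of linear
features, via symmetrization. -/
theorem stmt18 {E : Type*} [MeasurableSpace E] (ρ : Measure E) [IsProbabilityMeasure ρ]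
    (N T : ℕ) (hT : 0 < T) (ψ : E → Fin N → ℝ) (hψ : Measurable ψ)
    (hmom : Integrable (fun x => (∑ j, ψ x j ^ 2) ^ 2) ρ)
    (G : (Fin T → E) → ℝ)
    (hG : ∀ xs, G xs = ⨆ a : {a : Fin N → ℝ // ∑ j, a j ^ 2 ≤ 1},
      |(1 / (T : ℝ)) * ∑ i, (∑ j, a.1 j * ψ (xs i) j) ^ 2 -
        ∫ x, (∑ j, a.1 j * ψ x j) ^ 2 ∂ρ|)
    (hGint : Integrable G (Measure.pi fun _ : Fin T => ρ)) :
    ∫ xs, G xs ∂(Measure.pi fun _ : Fin T => ρ) ≤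
      2 * Real.sqrt ((∫ x, (∑ j, ψ x j ^ 2) ^ 2 ∂ρ) / T) :=
  stmt18_general ρ N T hT ψ hψ hmom G hG
end
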